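/- arXiv:0906.0617 — 6 statements merged into one kernel-verified Lean document; each statement's English description precedes it below -/
import Mathlib

section
/- Let E be a normed vector space, E' a Banach space, ε > 0, and 0 ≤ p < 1. If f : E → E' satisfies ‖f(x+y) − f(x) − f(y)‖ ≤ ε(‖x‖^p + ‖y‖^p) for all x, y ∈ E, then there exists a unique additive mapping T : E → E' such that ‖f(x) − T(x)‖ ≤ (2ε/(2 − 2^p))·‖x‖^p for all x ∈ E. -/
/-!
Hyers' direct method. Applying the hypothesis at the points `2ⁿx, 2ⁿy` shows that the additivity
defect of `x ↦ 2⁻ⁿ f(2ⁿx)` is at most `ε (‖x‖ᵖ + ‖y‖ᵖ) (2ᵖ/2)ⁿ`; taking `y = x`, consecutive terms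
of this sequence differ by at most `ε ‖x‖ᵖ (2ᵖ/2)ⁿ`. As `p < 1`, the sequence converges geometrically
to an additive map `T`, and summing the series gives `‖f x - T x‖ ≤ ε ‖x‖ᵖ / (1 - 2ᵖ/2)`.
Uniqueness: the difference of two such maps is additive and `O(‖x‖ᵖ)`, and evaluating it at `2ⁿx`
forces it to vanish.
-/

open Filter Topology

section

variable {E E' : Type*} [NormedAddCommGroup E] [NormedSpace ℝ E]
  [NormedAddCommGroup E'] [NormedSpace ℝ E']

lemma norm_two_pow_nsmul_rpow (x : E) (n : ℕ) (p : ℝ) :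
    ‖(2 ^ n) • x‖ ^ p = ((2 : ℝ) ^ p) ^ n * ‖x‖ ^ p := by
  rw [RCLike.norm_nsmul ℝ, nsmul_eq_mul, Nat.cast_pow, Nat.cast_ofNat,
    Real.mul_rpow (by positivity) (norm_nonneg x), Real.rpow_pow_comm zero_le_two]

lemma two_rpow_div_two_lt_one {p : ℝ} (hp : p < 1) : (2 : ℝ) ^ p / 2 < 1 := by
  rw [div_lt_one two_pos]
  exact Real.rpow_lt_self_of_one_lt one_lt_two hp

lemma tendsto_mul_two_rpow_div_two_pow_nhds_zero (C : ℝ) {p : ℝ} (hp : p < 1) :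
    Tendsto (fun n : ℕ => C * ((2 : ℝ) ^ p / 2) ^ n) atTop (𝓝 0) := by
  simpa using (tendsto_pow_atTop_nhds_zero_of_lt_one (by positivity)
    (two_rpow_div_two_lt_one hp)).const_mul C

lemma AddMonoidHom.eq_zero_of_norm_le_mul_rpow (S : E →+ E') {C p : ℝ} (hp : p < 1)
    (hS : ∀ x, ‖S x‖ ≤ C * ‖x‖ ^ p) : S = 0 := by
  ext x
  have hbound (n : ℕ) : ‖S x‖ ≤ C * ‖x‖ ^ p * ((2 : ℝ) ^ p / 2) ^ n := by
    have h := hS (2 ^ n • x)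
    rw [map_nsmul, RCLike.norm_nsmul ℝ, nsmul_eq_mul, norm_two_pow_nsmul_rpow] at h
    rw [div_pow, ← mul_div_assoc, le_div_iff₀ (by positivity)]
    push_cast at h
    linarith
  exact norm_le_zero_iff.mp
    (ge_of_tendsto' (tendsto_mul_two_rpow_div_two_pow_nhds_zero _ hp) hbound)

noncomputable def doublingSeq (f : E → E') (x : E) (n : ℕ) : E' := ((2 : ℝ) ^ n)⁻¹ • f (2 ^ n • x)

section
variable {f : E → E'} {ε p : ℝ}
  (hf : ∀ x y, ‖f (x + y) - f x - f y‖ ≤ ε * (‖x‖ ^ p + ‖y‖ ^ p))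
include hf

lemma norm_doublingSeq_add_sub_le (x y : E) (n : ℕ) :
    ‖doublingSeq f (x + y) n - doublingSeq f x n - doublingSeq f y n‖
      ≤ ε * (‖x‖ ^ p + ‖y‖ ^ p) * ((2 : ℝ) ^ p / 2) ^ n := by
  simp only [doublingSeq, nsmul_add, ← smul_sub]
  rw [norm_smul, Real.norm_of_nonneg (by positivity), div_pow, ← mul_div_assoc,
    inv_mul_le_iff₀ (by positivity), mul_div_cancel₀ _ (by positivity)]
  calc _ ≤ ε * (‖2 ^ n • x‖ ^ p + ‖2 ^ n • y‖ ^ p) := hf _ _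
    _ = _ := by rw [norm_two_pow_nsmul_rpow, norm_two_pow_nsmul_rpow]; ring

lemma dist_doublingSeq_succ_le (x : E) (n : ℕ) :
    dist (doublingSeq f x n) (doublingSeq f x (n + 1))
      ≤ ε * ‖x‖ ^ p * ((2 : ℝ) ^ p / 2) ^ n := by
  have hsucc : doublingSeq f x (n + 1) = (2 : ℝ)⁻¹ • doublingSeq f (x + x) n := by
    simp only [doublingSeq, ← two_nsmul, pow_succ, mul_inv, smul_smul, mul_comm]
  have h := norm_doublingSeq_add_sub_le hf x x n
  have hsub : doublingSeq f x n - (2 : ℝ)⁻¹ • doublingSeq f (x + x) n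
      = -(2 : ℝ)⁻¹ • (doublingSeq f (x + x) n - doublingSeq f x n - doublingSeq f x n) := by
    module
  rw [dist_eq_norm, hsucc, hsub, norm_smul, norm_neg, norm_inv, Real.norm_two]
  linarith

lemma cauchySeq_doublingSeq (hp : p < 1) (x : E) : CauchySeq (doublingSeq f x) :=
  cauchySeq_of_le_geometric _ _ (two_rpow_div_two_lt_one hp) (dist_doublingSeq_succ_le hf x)

end

noncomputable def doublingLimit (f : E → E') (x : E) : E' := limUnder atTop (doublingSeq f x)

section
variable [CompleteSpace E'] {f : E → E'} {ε p : ℝ}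
  (hf : ∀ x y, ‖f (x + y) - f x - f y‖ ≤ ε * (‖x‖ ^ p + ‖y‖ ^ p)) (hp : p < 1)
include hf hp

lemma tendsto_doublingLimit (x : E) :
    Tendsto (doublingSeq f x) atTop (𝓝 (doublingLimit f x)) :=
  (cauchySeq_doublingSeq hf hp x).tendsto_limUnder

lemma doublingLimit_add (x y : E) :
    doublingLimit f (x + y) = doublingLimit f x + doublingLimit f y := by
  have hdefect : Tendsto (fun n => doublingSeq f (x + y) n - doublingSeq f x n - doublingSeq f y n)
      atTop (𝓝 (doublingLimit f (x + y) - doublingLimit f x - doublingLimit f y)) :=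
    ((tendsto_doublingLimit hf hp _).sub (tendsto_doublingLimit hf hp _)).sub
      (tendsto_doublingLimit hf hp _)
  have h0 := tendsto_nhds_unique hdefect (squeeze_zero_norm (norm_doublingSeq_add_sub_le hf x y)
    (tendsto_mul_two_rpow_div_two_pow_nhds_zero _ hp))
  rwa [sub_sub, sub_eq_zero] at h0

lemma norm_sub_doublingLimit_le (x : E) :
    ‖f x - doublingLimit f x‖ ≤ 2 * ε / (2 - (2 : ℝ) ^ p) * ‖x‖ ^ p := by
  have h := dist_le_of_le_geometric_of_tendsto₀ _ _ (two_rpow_div_two_lt_one hp)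
    (dist_doublingSeq_succ_le hf x) (tendsto_doublingLimit hf hp x)
  have hden : (2 : ℝ) ^ p < 2 := by linarith [two_rpow_div_two_lt_one hp]
  rw [dist_eq_norm] at h
  convert h using 1
  · simp [doublingSeq]
  · field_simp

end

end

theorem rassias_stability_general {E E' : Type*}
    [NormedAddCommGroup E] [NormedSpace ℝ E]
    [NormedAddCommGroup E'] [NormedSpace ℝ E'] [CompleteSpace E']
    (f : E → E') (ε p : ℝ) (hp1 : p < 1)
    (hf : ∀ x y : E, ‖f (x + y) - f x - f y‖ ≤ ε * (‖x‖ ^ p + ‖y‖ ^ p)) :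
    ∃! T : E → E',
      (∀ x y : E, T (x + y) = T x + T y) ∧
      (∀ x : E, ‖f x - T x‖ ≤ (2 * ε / (2 - (2 : ℝ) ^ p)) * ‖x‖ ^ p) := by
  refine ⟨doublingLimit f, ⟨doublingLimit_add hf hp1, norm_sub_doublingLimit_le hf hp1⟩, ?_⟩
  rintro T ⟨hT_add, hT_le⟩
  let S : E →+ E' := AddMonoidHom.mk' (fun x => T x - doublingLimit f x) fun x y => by
    simp only [hT_add, doublingLimit_add hf hp1]
    abel
  have hS (x : E) : ‖S x‖ ≤ 2 * (2 * ε / (2 - (2 : ℝ) ^ p)) * ‖x‖ ^ p := by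
    calc ‖S x‖ = ‖(f x - doublingLimit f x) - (f x - T x)‖ := by
          simp only [S, AddMonoidHom.mk'_apply, sub_sub_sub_cancel_left]
      _ ≤ ‖f x - doublingLimit f x‖ + ‖f x - T x‖ := norm_sub_le _ _
      _ ≤ _ := by linarith [norm_sub_doublingLimit_le hf hp1 x, hT_le x]
  funext x
  exact sub_eq_zero.mp (DFunLike.congr_fun (S.eq_zero_of_norm_le_mul_rpow hp1 hS) x)

/-- Rassias's stability theorem: `0 ≤ p < 1`. -/
theorem rassias_stability {E E' : Type*}
    [NormedAddCommGroup E] [NormedSpace ℝ E]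
    [NormedAddCommGroup E'] [NormedSpace ℝ E'] [CompleteSpace E']
    (f : E → E') (ε p : ℝ) (hε : 0 < ε) (hp0 : 0 ≤ p) (hp1 : p < 1)
    (hf : ∀ x y : E, ‖f (x + y) - f x - f y‖ ≤ ε * (‖x‖ ^ p + ‖y‖ ^ p)) :
    ∃! T : E → E',
      (∀ x y : E, T (x + y) = T x + T y) ∧
      (∀ x : E, ‖f x - T x‖ ≤ (2 * ε / (2 - (2 : ℝ) ^ p)) * ‖x‖ ^ p) :=
  rassias_stability_general f ε p hp1 hf
end

section
/- Let A be a normed space over ℂ and X a Banach space. Suppose D : A → X satisfies D((x+y+z)/3) + D((x−2y+z)/3) + D((x+y−2z)/3) = D(x) for all x, y, z ∈ A. Then D is additive: D(w+t+s) = D(w) + D(t) + D(s) for all w, t, s ∈ A, and in particular D(a+b) = D(a)+D(b) for all a, b ∈ A. -/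
/-!
Substituting `x = w + t + s`, `y = w - t`, `z = w - s` turns the three arguments on the left of
the equation into `w`, `t`, `s`, which gives additivity in three variables. Taking all three
equal to `0` yields `2 • D 0 = 0`, so `D 0 = 0` because `X` has no `2`-torsion, and two-variable
additivity follows with `s = 0`.
-/

theorem map_add_add_of_jensen_type {K A X : Type*} [Field K] [AddCommGroup A] [Module K A]
    [AddCommGroup X] (h3 : (3 : K) ≠ 0) (D : A → X)
    (hD : ∀ x y z : A,
      D ((3 : K)⁻¹ • (x + y + z)) + D ((3 : K)⁻¹ • (x - 2 • y + z)) +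
        D ((3 : K)⁻¹ • (x + y - 2 • z)) = D x)
    (w t s : A) : D (w + t + s) = D w + D t + D s := by
  have hw : (3 : K)⁻¹ • ((w + t + s) + (w - t) + (w - s)) = w := by
    match_scalars <;> field_simp <;> ring
  have ht : (3 : K)⁻¹ • ((w + t + s) - 2 • (w - t) + (w - s)) = t := by
    match_scalars <;> field_simp <;> ring
  have hs : (3 : K)⁻¹ • ((w + t + s) + (w - t) - 2 • (w - s)) = s := by
    match_scalars <;> field_simp <;> ring
  simpa only [hw, ht, hs] using (hD (w + t + s) (w - t) (w - s)).symm

theorem map_add_of_map_add_add {A X : Type*} [AddCommGroup A] [AddCommGroup X]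
    [IsAddTorsionFree X] (D : A → X) (hD : ∀ w t s : A, D (w + t + s) = D w + D t + D s)
    (a b : A) : D (a + b) = D a + D b := by
  have h0 : D 0 = 0 := by
    have h : D 0 = D 0 + D 0 + D 0 := by simpa only [add_zero] using hD 0 0 0
    have h2 : 2 • D 0 = 0 := by rw [two_nsmul]; simpa using h.symm
    simpa using h2
  simpa [h0] using hD a b 0

theorem jensen_type_additive_general {A X : Type*}
    [NormedAddCommGroup A] [NormedSpace ℂ A]
    [NormedAddCommGroup X] [NormedSpace ℂ X]
    (D : A → X)
    (hD : ∀ x y z : A,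
      D (((3 : ℂ)⁻¹) • (x + y + z)) + D (((3 : ℂ)⁻¹) • (x - 2 • y + z)) +
        D (((3 : ℂ)⁻¹) • (x + y - 2 • z)) = D x) :
    (∀ w t s : A, D (w + t + s) = D w + D t + D s) ∧
    (∀ a b : A, D (a + b) = D a + D b) := by
  have hadd3 := map_add_add_of_jensen_type (by norm_num) D hD
  have : IsAddTorsionFree X := .of_isTorsionFree ℂ X
  exact ⟨hadd3, map_add_of_map_add_add D hadd3⟩

/-- A solution of the generalized Jensen-type equation is additive. -/
theorem jensen_type_additive {A X : Type*}
    [NormedAddCommGroup A] [NormedSpace ℂ A]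
    [NormedAddCommGroup X] [NormedSpace ℂ X] [CompleteSpace X]
    (D : A → X)
    (hD : ∀ x y z : A,
      D (((3 : ℂ)⁻¹) • (x + y + z)) + D (((3 : ℂ)⁻¹) • (x - 2 • y + z)) +
        D (((3 : ℂ)⁻¹) • (x + y - 2 • z)) = D x) :
    (∀ w t s : A, D (w + t + s) = D w + D t + D s) ∧
    (∀ a b : A, D (a + b) = D a + D b) :=
  jensen_type_additive_general D hD
end

section
/- Let A be a normed ℂ-vector space and X a complex Banach space. Let f : A → X and φ : A³ → [0,∞) satisfy ‖μ f((x+y+z)/3) + μ f((x−2y+z)/3) + μ f((x+y−2z)/3) − f(μx)‖ ≤ φ(x,y,z) for all x,y,z ∈ A and all μ in the unit circle 𝕋 ⊆ ℂ. Suppose there exists L < 1 with φ(x,y,z) ≤ 3L·φ(x/3, y/3, z/3) for all x,y,z. Then there exists a unique additive function D : A → X with D(μx) = μD(x) for all μ ∈ 𝕋 and all x ∈ A, such that ‖f(x) − D(x)‖ ≤ (L/(1−L))·φ(x,0,0) for all x ∈ A. Moreover D(x) = lim_{n→∞} f(3ⁿx)/3ⁿ. -/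
/-!
Hyers' direct method. The contraction hypothesis gives `φ(3ⁿx, 3ⁿy, 3ⁿz) / 3ⁿ ≤ Lⁿ φ(x, y, z)`
(when `L < 0` it forces `φ = 0`). The defect of the equation for `x ↦ 3⁻ⁿ f(3ⁿx)` at `(x, y, z)` is
`3⁻ⁿ` times the defect of `f` at `(3ⁿx, 3ⁿy, 3ⁿz)`, and consecutive terms of this sequence differ by
a third of its defect at `(3x, 0, 0)`. So the sequence is Cauchy at geometric rate `L`, its limit
`D` is within `L / (1 - L) · φ(x, 0, 0)` of `f`, and `D` satisfies the equation exactly for every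
`μ ∈ 𝕋`. Additivity follows from the triple `(a + b, a - b, a)` at `μ = 1`, and homogeneity from
comparing the triples `(x, 0, 0)` at `μ` and at `1`.
-/

open Filter Topology

section

variable {A : Type*} [NormedAddCommGroup A] [NormedSpace ℂ A] {φ : A → A → A → ℝ} {L : ℝ}

theorem control_eq_zero_of_neg (hφ : ∀ x y z, 0 ≤ φ x y z)
    (hcontr : ∀ x y z, φ x y z ≤ 3 * L * φ ((3 : ℂ)⁻¹ • x) ((3 : ℂ)⁻¹ • y) ((3 : ℂ)⁻¹ • z))
    (hL : L < 0) (x y z : A) : φ x y z = 0 :=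
  le_antisymm ((hcontr x y z).trans (mul_nonpos_of_nonpos_of_nonneg (by linarith) (hφ _ _ _)))
    (hφ x y z)

theorem inv_three_pow_mul_control_le (hφ : ∀ x y z, 0 ≤ φ x y z)
    (hcontr : ∀ x y z, φ x y z ≤ 3 * L * φ ((3 : ℂ)⁻¹ • x) ((3 : ℂ)⁻¹ • y) ((3 : ℂ)⁻¹ • z))
    (n : ℕ) (x y z : A) :
    ((3 : ℝ) ^ n)⁻¹ * φ ((3 : ℂ) ^ n • x) ((3 : ℂ) ^ n • y) ((3 : ℂ) ^ n • z) ≤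
      L ^ n * φ x y z := by
  rcases lt_or_ge L 0 with hL | hL
  · simp [control_eq_zero_of_neg hφ hcontr hL]
  induction n with
  | zero => simp
  | succ n ih =>
    have hscale : ∀ a : A, (3 : ℂ)⁻¹ • (3 : ℂ) ^ (n + 1) • a = (3 : ℂ) ^ n • a := fun a => by module
    have h := hcontr ((3 : ℂ) ^ (n + 1) • x) ((3 : ℂ) ^ (n + 1) • y) ((3 : ℂ) ^ (n + 1) • z)
    rw [hscale, hscale, hscale] at h
    set a := φ ((3 : ℂ) ^ n • x) ((3 : ℂ) ^ n • y) ((3 : ℂ) ^ n • z)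
    set b := φ ((3 : ℂ) ^ (n + 1) • x) ((3 : ℂ) ^ (n + 1) • y) ((3 : ℂ) ^ (n + 1) • z)
    calc ((3 : ℝ) ^ (n + 1))⁻¹ * b ≤ ((3 : ℝ) ^ (n + 1))⁻¹ * (3 * L * a) := by gcongr
      _ = L * (((3 : ℝ) ^ n)⁻¹ * a) := by field_simp; ring
      _ ≤ L * (L ^ n * φ x y z) := by gcongr
      _ = L ^ (n + 1) * φ x y z := by ring

theorem tendsto_inv_three_pow_mul_control (hφ : ∀ x y z, 0 ≤ φ x y z)
    (hcontr : ∀ x y z, φ x y z ≤ 3 * L * φ ((3 : ℂ)⁻¹ • x) ((3 : ℂ)⁻¹ • y) ((3 : ℂ)⁻¹ • z))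
    (hL : L < 1) (x y z : A) :
    Tendsto (fun n : ℕ => ((3 : ℝ) ^ n)⁻¹ * φ ((3 : ℂ) ^ n • x) ((3 : ℂ) ^ n • y) ((3 : ℂ) ^ n • z))
      atTop (𝓝 0) := by
  rcases lt_or_ge L 0 with hL₀ | hL₀
  · simp [control_eq_zero_of_neg hφ hcontr hL₀]
  refine squeeze_zero (fun n => mul_nonneg (by positivity) (hφ _ _ _))
    (inv_three_pow_mul_control_le hφ hcontr · x y z) ?_
  simpa using (tendsto_pow_atTop_nhds_zero_of_lt_one hL₀ hL).mul_const (φ x y z)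

end

noncomputable section

variable {A X : Type*} [NormedAddCommGroup A] [NormedSpace ℂ A]
  [NormedAddCommGroup X] [NormedSpace ℂ X]

def jensenDefect (f : A → X) (μ : ℂ) (x y z : A) : X :=
  μ • f ((3 : ℂ)⁻¹ • (x + y + z)) + μ • f ((3 : ℂ)⁻¹ • (x - 2 • y + z)) +
    μ • f ((3 : ℂ)⁻¹ • (x + y - 2 • z)) - f (μ • x)

def hyersSeq (f : A → X) (n : ℕ) (x : A) : X :=
  ((3 : ℂ) ^ n)⁻¹ • f ((3 : ℂ) ^ n • x)

theorem hyersSeq_zero (f : A → X) (x : A) : hyersSeq f 0 x = f x := by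
  simp [hyersSeq]

theorem norm_inv_three_pow_smul (n : ℕ) (v : X) :
    ‖((3 : ℂ) ^ n)⁻¹ • v‖ = ((3 : ℝ) ^ n)⁻¹ * ‖v‖ := by
  rw [norm_smul, norm_inv, norm_pow]; norm_num

theorem jensenDefect_hyersSeq (f : A → X) (n : ℕ) (μ : ℂ) (x y z : A) :
    jensenDefect (hyersSeq f n) μ x y z =
      ((3 : ℂ) ^ n)⁻¹ • jensenDefect f μ ((3 : ℂ) ^ n • x) ((3 : ℂ) ^ n • y) ((3 : ℂ) ^ n • z) := by
  have h₁ : (3 : ℂ) ^ n • (3 : ℂ)⁻¹ • (x + y + z) =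
      (3 : ℂ)⁻¹ • ((3 : ℂ) ^ n • x + (3 : ℂ) ^ n • y + (3 : ℂ) ^ n • z) := by module
  have h₂ : (3 : ℂ) ^ n • (3 : ℂ)⁻¹ • (x - 2 • y + z) =
      (3 : ℂ)⁻¹ • ((3 : ℂ) ^ n • x - 2 • (3 : ℂ) ^ n • y + (3 : ℂ) ^ n • z) := by module
  have h₃ : (3 : ℂ) ^ n • (3 : ℂ)⁻¹ • (x + y - 2 • z) =
      (3 : ℂ)⁻¹ • ((3 : ℂ) ^ n • x + (3 : ℂ) ^ n • y - 2 • (3 : ℂ) ^ n • z) := by module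
  have h₄ : (3 : ℂ) ^ n • μ • x = μ • (3 : ℂ) ^ n • x := smul_comm _ _ _
  simp only [jensenDefect, hyersSeq, h₁, h₂, h₃, h₄]
  module

theorem hyersSeq_sub_hyersSeq_succ (f : A → X) (n : ℕ) (x : A) :
    hyersSeq f n x - hyersSeq f (n + 1) x =
      (3 : ℂ)⁻¹ • jensenDefect (hyersSeq f n) 1 ((3 : ℂ) • x) 0 0 := by
  have h₁ : (3 : ℂ)⁻¹ • ((3 : ℂ) • x + 0 + 0) = x := by module
  have h₂ : (3 : ℂ)⁻¹ • ((3 : ℂ) • x - 2 • (0 : A) + 0) = x := by module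
  have h₃ : (3 : ℂ)⁻¹ • ((3 : ℂ) • x + 0 - 2 • (0 : A)) = x := by module
  have h₄ : (3 : ℂ) ^ n • (1 : ℂ) • (3 : ℂ) • x = (3 : ℂ) ^ (n + 1) • x := by module
  simp only [jensenDefect, hyersSeq, h₁, h₂, h₃, h₄]
  module

theorem norm_jensenDefect_hyersSeq_le {f : A → X} {μ : ℂ} {φ : A → A → A → ℝ}
    (hf : ∀ x y z, ‖jensenDefect f μ x y z‖ ≤ φ x y z) (n : ℕ) (x y z : A) :
    ‖jensenDefect (hyersSeq f n) μ x y z‖ ≤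
      ((3 : ℝ) ^ n)⁻¹ * φ ((3 : ℂ) ^ n • x) ((3 : ℂ) ^ n • y) ((3 : ℂ) ^ n • z) := by
  rw [jensenDefect_hyersSeq, norm_inv_three_pow_smul]
  gcongr
  exact hf _ _ _

theorem jensenDefect_eq_zero_of_tendsto {F : ℕ → A → X} {D : A → X} {b : ℕ → ℝ} {μ : ℂ}
    {x y z : A} (hF : ∀ p, Tendsto (fun n => F n p) atTop (𝓝 (D p)))
    (hb : ∀ n, ‖jensenDefect (F n) μ x y z‖ ≤ b n) (hb₀ : Tendsto b atTop (𝓝 0)) :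
    jensenDefect D μ x y z = 0 := by
  have hlim : Tendsto (fun n => jensenDefect (F n) μ x y z) atTop (𝓝 (jensenDefect D μ x y z)) :=
    ((((hF _).const_smul μ).add ((hF _).const_smul μ)).add ((hF _).const_smul μ)).sub (hF _)
  exact tendsto_nhds_unique hlim (squeeze_zero_norm hb hb₀)

theorem map_zero_of_jensenDefect_eq_zero {D : A → X} (h : jensenDefect D 1 0 0 0 = 0) :
    D 0 = 0 := by
  have h₂ : (2 : ℂ) • D 0 = 0 := by simpa [jensenDefect, two_smul] using h
  exact (smul_eq_zero.mp h₂).resolve_left two_ne_zero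

theorem map_add_of_jensenDefect_eq_zero {D : A → X} (h : ∀ x y z, jensenDefect D 1 x y z = 0)
    (a b : A) : D (a + b) = D a + D b := by
  have hab := h (a + b) (a - b) a
  have h₁ : (3 : ℂ)⁻¹ • ((a + b) + (a - b) + a) = a := by module
  have h₂ : (3 : ℂ)⁻¹ • ((a + b) - 2 • (a - b) + a) = b := by module
  have h₃ : (3 : ℂ)⁻¹ • ((a + b) + (a - b) - 2 • a) = 0 := by module
  simp only [jensenDefect, one_smul, h₁, h₂, h₃, map_zero_of_jensenDefect_eq_zero (h 0 0 0),
    add_zero] at hab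
  exact (sub_eq_zero.mp hab).symm

theorem map_smul_of_jensenDefect_eq_zero {D : A → X} {μ : ℂ} (h₁ : ∀ x, jensenDefect D 1 x 0 0 = 0)
    (hμ : ∀ x, jensenDefect D μ x 0 0 = 0) (x : A) : D (μ • x) = μ • D x := by
  have hx := h₁ x
  have hμx := hμ x
  simp only [jensenDefect, smul_zero, add_zero, sub_zero, one_smul] at hx hμx
  rw [← sub_eq_zero.mp hx, ← sub_eq_zero.mp hμx, smul_add, smul_add]

theorem dist_hyersSeq_succ_le {f : A → X} {φ : A → A → A → ℝ} {L : ℝ}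
    (hf : ∀ x y z, ‖jensenDefect f 1 x y z‖ ≤ φ x y z) (hφ : ∀ x y z, 0 ≤ φ x y z)
    (hcontr : ∀ x y z, φ x y z ≤ 3 * L * φ ((3 : ℂ)⁻¹ • x) ((3 : ℂ)⁻¹ • y) ((3 : ℂ)⁻¹ • z))
    (x : A) (n : ℕ) : dist (hyersSeq f n x) (hyersSeq f (n + 1) x) ≤ L * φ x 0 0 * L ^ n := by
  have hscale : (3 : ℂ) ^ n • (3 : ℂ) • x = (3 : ℂ) ^ (n + 1) • x := by module
  rw [dist_eq_norm, hyersSeq_sub_hyersSeq_succ, norm_smul]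
  calc ‖(3 : ℂ)⁻¹‖ * ‖jensenDefect (hyersSeq f n) 1 ((3 : ℂ) • x) 0 0‖
      ≤ 3⁻¹ * (((3 : ℝ) ^ n)⁻¹ *
          φ ((3 : ℂ) ^ n • (3 : ℂ) • x) ((3 : ℂ) ^ n • 0) ((3 : ℂ) ^ n • 0)) := by
        rw [norm_inv, Complex.norm_ofNat]
        gcongr
        exact norm_jensenDefect_hyersSeq_le hf n _ _ _
    _ = ((3 : ℝ) ^ (n + 1))⁻¹ *
          φ ((3 : ℂ) ^ (n + 1) • x) ((3 : ℂ) ^ (n + 1) • 0) ((3 : ℂ) ^ (n + 1) • 0) := by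
        rw [hscale, smul_zero, smul_zero, pow_succ]; ring
    _ ≤ L ^ (n + 1) * φ x 0 0 := inv_three_pow_mul_control_le hφ hcontr _ _ _ _
    _ = L * φ x 0 0 * L ^ n := by ring

end

theorem jensen_type_stability_general {A X : Type*}
    [NormedAddCommGroup A] [NormedSpace ℂ A]
    [NormedAddCommGroup X] [NormedSpace ℂ X] [CompleteSpace X]
    (f : A → X) (φ : A → A → A → ℝ)
    (hf : ∀ (μ : ℂ), ‖μ‖ = 1 → ∀ x y z : A,
      ‖μ • f (((3 : ℂ)⁻¹) • (x + y + z)) + μ • f (((3 : ℂ)⁻¹) • (x - 2 • y + z)) +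
          μ • f (((3 : ℂ)⁻¹) • (x + y - 2 • z)) - f (μ • x)‖ ≤ φ x y z)
    (L : ℝ) (hL : L < 1)
    (hcontr : ∀ x y z : A,
      φ x y z ≤ 3 * L * φ (((3 : ℂ)⁻¹) • x) (((3 : ℂ)⁻¹) • y) (((3 : ℂ)⁻¹) • z)) :
    ∃! D : A → X,
      (∀ a b : A, D (a + b) = D a + D b) ∧
      (∀ (μ : ℂ), ‖μ‖ = 1 → ∀ x : A, D (μ • x) = μ • D x) ∧
      (∀ x : A, ‖f x - D x‖ ≤ (L / (1 - L)) * φ x 0 0) ∧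
      (∀ x : A, Filter.Tendsto (fun n : ℕ => ((3 : ℂ) ^ n)⁻¹ • f ((3 : ℂ) ^ n • x))
        Filter.atTop (nhds (D x))) := by
  have hf₁ : ∀ x y z, ‖jensenDefect f 1 x y z‖ ≤ φ x y z := hf 1 norm_one
  have hφ : ∀ x y z, 0 ≤ φ x y z := fun x y z => (norm_nonneg _).trans (hf₁ x y z)
  have hdist := dist_hyersSeq_succ_le hf₁ hφ hcontr
  choose D hD using fun x =>
    cauchySeq_tendsto_of_complete (cauchySeq_of_le_geometric L _ hL (hdist x))
  have hexact : ∀ μ : ℂ, ‖μ‖ = 1 → ∀ x y z, jensenDefect D μ x y z = 0 := fun μ hμ x y z =>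
    jensenDefect_eq_zero_of_tendsto hD (fun n => norm_jensenDefect_hyersSeq_le (hf μ hμ) n x y z)
      (tendsto_inv_three_pow_mul_control hφ hcontr hL x y z)
  refine ⟨D, ⟨map_add_of_jensenDefect_eq_zero (hexact 1 norm_one), fun μ hμ =>
    map_smul_of_jensenDefect_eq_zero (hexact 1 norm_one · 0 0) (hexact μ hμ · 0 0),
    fun x => ?_, hD⟩, ?_⟩
  · have h := dist_le_of_le_geometric_of_tendsto₀ L _ hL (hdist x) (hD x)
    rwa [hyersSeq_zero, dist_eq_norm, ← div_mul_eq_mul_div] at h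
  · rintro D' ⟨-, -, -, hD'⟩
    funext x
    exact tendsto_nhds_unique (hD' x) (hD x)

/-- Stability of the generalized Jensen-type equation with unit-circle
parameter: existence of a unique additive, `𝕋`-homogeneous approximant. -/
theorem jensen_type_stability {A X : Type*}
    [NormedAddCommGroup A] [NormedSpace ℂ A]
    [NormedAddCommGroup X] [NormedSpace ℂ X] [CompleteSpace X]
    (f : A → X) (φ : A → A → A → ℝ) (hφ : ∀ x y z, 0 ≤ φ x y z)
    (hf : ∀ (μ : ℂ), ‖μ‖ = 1 → ∀ x y z : A,
      ‖μ • f (((3 : ℂ)⁻¹) • (x + y + z)) + μ • f (((3 : ℂ)⁻¹) • (x - 2 • y + z)) +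
          μ • f (((3 : ℂ)⁻¹) • (x + y - 2 • z)) - f (μ • x)‖ ≤ φ x y z)
    (L : ℝ) (hL : L < 1)
    (hcontr : ∀ x y z : A,
      φ x y z ≤ 3 * L * φ (((3 : ℂ)⁻¹) • x) (((3 : ℂ)⁻¹) • y) (((3 : ℂ)⁻¹) • z)) :
    ∃! D : A → X,
      (∀ a b : A, D (a + b) = D a + D b) ∧
      (∀ (μ : ℂ), ‖μ‖ = 1 → ∀ x : A, D (μ • x) = μ • D x) ∧
      (∀ x : A, ‖f x - D x‖ ≤ (L / (1 - L)) * φ x 0 0) ∧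
      (∀ x : A, Filter.Tendsto (fun n : ℕ => ((3 : ℂ) ^ n)⁻¹ • f ((3 : ℂ) ^ n • x))
        Filter.atTop (nhds (D x))) :=
  jensen_type_stability_general f φ hf L hL hcontr
end

section
/- Let A be a normed space, X a Banach space, f : A → X, φ : A → [0,∞), and L < 1 with φ(x) ≤ 3L·φ(x/3) for all x. If ‖3f(x/3) − f(x)‖ ≤ φ(x) for all x ∈ A, then ‖(1/3)f(3x) − f(x)‖ ≤ L·φ(x) for all x ∈ A, and the sequence (f(3ⁿx)/3ⁿ) is Cauchy for each x; its limit D(x) satisfies ‖f(x) − D(x)‖ ≤ (L/(1−L))·φ(x) and D(3x) = 3D(x). -/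
/-!
Put `g n x = c⁻ⁿ f(cⁿ x)`. Applying the hypothesis on `f` at `c x` and the growth condition on `φ`
gives `‖c⁻¹ f(c x) - f x‖ ≤ L φ(x)`; iterating the growth condition gives `φ(cⁿ x) ≤ (c L)ⁿ φ(x)`,
so consecutive terms satisfy `dist (g n x) (g (n+1) x) ≤ L φ(x) Lⁿ`. The sequence is therefore
Cauchy, its limit `D` is within `L φ(x) / (1 - L)` of `g 0 x = f x`, and `g n (c x) = c g (n+1) x`
passes to the limit as `D(c x) = c D(x)`. A negative `L` forces `φ = 0` and reduces to `L = 0`.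
-/

open Filter Topology

section Rescaling

variable {A X : Type*} [MulAction ℝ A] [NormedAddCommGroup X] [NormedSpace ℝ X]
  {c L : ℝ} {f : A → X} {φ : A → ℝ}

noncomputable def rescaled (c : ℝ) (f : A → X) (x : A) (n : ℕ) : X := (c ^ n)⁻¹ • f (c ^ n • x)

@[simp]
lemma rescaled_zero (c : ℝ) (f : A → X) (x : A) : rescaled c f x 0 = f x := by
  simp [rescaled]

lemma rescaled_smul (hc : c ≠ 0) (f : A → X) (x : A) (n : ℕ) :
    rescaled c f (c • x) n = c • rescaled c f x (n + 1) := by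
  simp only [rescaled, smul_smul, pow_succ]
  congr 2
  field_simp

lemma apply_pow_smul_le {K : ℝ} (hc : c ≠ 0) (hK : 0 ≤ K) (hφ : ∀ x, φ x ≤ K * φ (c⁻¹ • x))
    (x : A) (n : ℕ) : φ (c ^ n • x) ≤ K ^ n * φ x := by
  induction n with
  | zero => simp
  | succ n ih =>
    calc φ (c ^ (n + 1) • x) ≤ K * φ (c ^ n • x) := by
          simpa [pow_succ', smul_smul, hc] using hφ (c ^ (n + 1) • x)
      _ ≤ K * (K ^ n * φ x) := mul_le_mul_of_nonneg_left ih hK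
      _ = K ^ (n + 1) * φ x := by ring

lemma norm_inv_smul_apply_smul_sub_le (hc : 0 < c)
    (hφ : ∀ x, φ x ≤ c * L * φ (c⁻¹ • x)) (hf : ∀ x, ‖c • f (c⁻¹ • x) - f x‖ ≤ φ x) (x : A) :
    ‖c⁻¹ • f (c • x) - f x‖ ≤ L * φ x := by
  have hcx := hf (c • x)
  have hφcx := hφ (c • x)
  rw [inv_smul_smul₀ hc.ne'] at hcx hφcx
  calc ‖c⁻¹ • f (c • x) - f x‖ = c⁻¹ * ‖c • f x - f (c • x)‖ := by
        rw [← norm_smul_of_nonneg (inv_nonneg.2 hc.le), ← norm_neg, smul_sub,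
          inv_smul_smul₀ hc.ne', neg_sub]
    _ ≤ c⁻¹ * (c * L * φ x) := by gcongr; exact hcx.trans hφcx
    _ = L * φ x := by field_simp

lemma dist_rescaled_succ_le (hc : 0 < c) (hL : 0 ≤ L)
    (hφ : ∀ x, φ x ≤ c * L * φ (c⁻¹ • x)) (hf : ∀ x, ‖c • f (c⁻¹ • x) - f x‖ ≤ φ x)
    (x : A) (n : ℕ) :
    dist (rescaled c f x n) (rescaled c f x (n + 1)) ≤ L * φ x * L ^ n := by
  have hcn : 0 < c ^ n := pow_pos hc n
  calc dist (rescaled c f x n) (rescaled c f x (n + 1))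
      = (c ^ n)⁻¹ * ‖c⁻¹ • f (c • c ^ n • x) - f (c ^ n • x)‖ := by
        rw [dist_comm, dist_eq_norm, ← norm_smul_of_nonneg (inv_nonneg.2 hcn.le)]
        simp only [rescaled, smul_sub, smul_smul, pow_succ', mul_inv_rev]
    _ ≤ (c ^ n)⁻¹ * (L * ((c * L) ^ n * φ x)) := by
        gcongr
        exact (norm_inv_smul_apply_smul_sub_le hc hφ hf _).trans
          (mul_le_mul_of_nonneg_left (apply_pow_smul_le hc.ne' (by positivity) hφ x n) hL)
    _ = L * φ x * L ^ n := by
        rw [mul_pow]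
        field_simp

lemma cauchySeq_rescaled (hc : 0 < c) (hL0 : 0 ≤ L) (hL : L < 1)
    (hφ : ∀ x, φ x ≤ c * L * φ (c⁻¹ • x)) (hf : ∀ x, ‖c • f (c⁻¹ • x) - f x‖ ≤ φ x) (x : A) :
    CauchySeq (rescaled c f x) :=
  cauchySeq_of_le_geometric L _ hL (dist_rescaled_succ_le hc hL0 hφ hf x)

lemma norm_sub_le_of_tendsto_rescaled (hc : 0 < c) (hL0 : 0 ≤ L) (hL : L < 1)
    (hφ : ∀ x, φ x ≤ c * L * φ (c⁻¹ • x)) (hf : ∀ x, ‖c • f (c⁻¹ • x) - f x‖ ≤ φ x)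
    {x : A} {d : X} (hd : Tendsto (rescaled c f x) atTop (𝓝 d)) :
    ‖f x - d‖ ≤ L / (1 - L) * φ x := by
  have h := dist_le_of_le_geometric_of_tendsto₀ L _ hL (dist_rescaled_succ_le hc hL0 hφ hf x) hd
  rw [rescaled_zero, dist_eq_norm] at h
  exact h.trans_eq (by ring)

lemma map_smul_of_tendsto_rescaled (hc : c ≠ 0) {D : A → X}
    (hD : ∀ x, Tendsto (rescaled c f x) atTop (𝓝 (D x))) (x : A) : D (c • x) = c • D x := by
  have hshift : Tendsto (fun n => c • rescaled c f x (n + 1)) atTop (𝓝 (c • D x)) :=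
    ((hD x).comp (tendsto_add_atTop_nat 1)).const_smul c
  simp only [← rescaled_smul hc] at hshift
  exact tendsto_nhds_unique (hD (c • x)) hshift

theorem exists_tendsto_rescaled [CompleteSpace X] (hc : 0 < c) (hL0 : 0 ≤ L) (hL : L < 1)
    (hφ : ∀ x, φ x ≤ c * L * φ (c⁻¹ • x)) (hf : ∀ x, ‖c • f (c⁻¹ • x) - f x‖ ≤ φ x) :
    (∀ x, CauchySeq (rescaled c f x)) ∧ ∃ D : A → X,
      (∀ x, Tendsto (rescaled c f x) atTop (𝓝 (D x))) ∧
      (∀ x, ‖f x - D x‖ ≤ L / (1 - L) * φ x) ∧ ∀ x, D (c • x) = c • D x := by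
  have hcauchy := cauchySeq_rescaled hc hL0 hL hφ hf
  have hD x := (hcauchy x).tendsto_limUnder
  exact ⟨hcauchy, _, hD, fun x => norm_sub_le_of_tendsto_rescaled hc hL0 hL hφ hf (hD x),
    map_smul_of_tendsto_rescaled hc.ne' hD⟩

end Rescaling

theorem ascending_iteration_general {A X : Type*}
    [NormedAddCommGroup A] [NormedSpace ℝ A]
    [NormedAddCommGroup X] [NormedSpace ℝ X] [CompleteSpace X]
    (f : A → X) (φ : A → ℝ)
    (L : ℝ) (hL : L < 1)
    (hcontr : ∀ x : A, φ x ≤ 3 * L * φ (((3 : ℝ)⁻¹) • x))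
    (hf : ∀ x : A, ‖(3 : ℝ) • f (((3 : ℝ)⁻¹) • x) - f x‖ ≤ φ x) :
    (∀ x : A, ‖((3 : ℝ)⁻¹) • f ((3 : ℝ) • x) - f x‖ ≤ L * φ x) ∧
    (∀ x : A, CauchySeq (fun n : ℕ => ((3 : ℝ) ^ n)⁻¹ • f ((3 : ℝ) ^ n • x))) ∧
    ∃ D : A → X,
      (∀ x : A, Filter.Tendsto (fun n : ℕ => ((3 : ℝ) ^ n)⁻¹ • f ((3 : ℝ) ^ n • x))
        Filter.atTop (nhds (D x))) ∧
      (∀ x : A, ‖f x - D x‖ ≤ (L / (1 - L)) * φ x) ∧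
      (∀ x : A, D ((3 : ℝ) • x) = (3 : ℝ) • D x) := by
  refine ⟨norm_inv_smul_apply_smul_sub_le three_pos hcontr hf, ?_⟩
  rcases le_or_gt 0 L with hL0 | hLneg
  · exact exists_tendsto_rescaled three_pos hL0 hL hcontr hf
  · have hφ_nonneg x : 0 ≤ φ x := (norm_nonneg _).trans (hf x)
    have hφ_zero x : φ x = 0 :=
      le_antisymm (by nlinarith [hcontr x, hφ_nonneg ((3 : ℝ)⁻¹ • x)]) (hφ_nonneg x)
    obtain ⟨hcauchy, D, hD, hfD, hD_smul⟩ :=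
      exists_tendsto_rescaled (L := 0) three_pos le_rfl one_pos (by simp [hφ_zero]) hf
    exact ⟨hcauchy, D, hD, fun x => by simpa [hφ_zero] using hfD x, hD_smul⟩

/-- The ascending fixed-point iteration: from the single-variable inequality
one obtains a Cauchy sequence `f(3ⁿx)/3ⁿ` whose limit `D` approximates `f`
with error `L/(1-L)·φ` and satisfies `D(3x) = 3D(x)`. -/
theorem ascending_iteration {A X : Type*}
    [NormedAddCommGroup A] [NormedSpace ℝ A]
    [NormedAddCommGroup X] [NormedSpace ℝ X] [CompleteSpace X]
    (f : A → X) (φ : A → ℝ) (hφ : ∀ x, 0 ≤ φ x)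
    (L : ℝ) (hL : L < 1)
    (hcontr : ∀ x : A, φ x ≤ 3 * L * φ (((3 : ℝ)⁻¹) • x))
    (hf : ∀ x : A, ‖(3 : ℝ) • f (((3 : ℝ)⁻¹) • x) - f x‖ ≤ φ x) :
    (∀ x : A, ‖((3 : ℝ)⁻¹) • f ((3 : ℝ) • x) - f x‖ ≤ L * φ x) ∧
    (∀ x : A, CauchySeq (fun n : ℕ => ((3 : ℝ) ^ n)⁻¹ • f ((3 : ℝ) ^ n • x))) ∧
    ∃ D : A → X,
      (∀ x : A, Filter.Tendsto (fun n : ℕ => ((3 : ℝ) ^ n)⁻¹ • f ((3 : ℝ) ^ n • x))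
        Filter.atTop (nhds (D x))) ∧
      (∀ x : A, ‖f x - D x‖ ≤ (L / (1 - L)) * φ x) ∧
      (∀ x : A, D ((3 : ℝ) • x) = (3 : ℝ) • D x) :=
  ascending_iteration_general f φ L hL hcontr hf
end

section
/- Let X' be the set of all functions from a normed space A to a Banach space X, and fix φ : A → [0,∞). Define d(g,h) := inf{C ∈ [0,∞) : ‖g(x) − h(x)‖ ≤ C·φ(x) for all x ∈ A} (with d(g,h) = ∞ if no such C exists). Then d is a complete generalized metric on X'. -/
/-!
In `ℝ≥0∞`, `a / 0 = ∞` for `a ≠ 0`, so `phiDist φ g h = ⨆ x, edist (g x) (h x) / φ x`: a weighted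
supremum of pointwise distances, for which the metric axioms hold pointwise. A `phiDist`-Cauchy
sequence is pointwise Cauchy because each `φ x` is finite, and its pointwise limit is a
`phiDist`-limit because `{g | phiDist φ f g ≤ C}` is closed under pointwise convergence.
-/

open scoped ENNReal

/-- The generalized metric `d(g,h) = inf {C : ‖g x - h x‖ ≤ C φ(x) ∀ x}`
on the set of functions `A → X` (value `∞` when no such `C` exists). -/
noncomputable def phiDist {A X : Type*} [NormedAddCommGroup X] (φ : A → ℝ)
    (g h : A → X) : ℝ≥0∞ :=
  sInf {C : ℝ≥0∞ | ∀ x : A, (‖g x - h x‖₊ : ℝ≥0∞) ≤ C * ENNReal.ofReal (φ x)}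

open Filter Topology

section
variable {A X : Type*} [NormedAddCommGroup X] {φ : A → ℝ}

theorem phiDist_eq_iSup (g h : A → X) :
    phiDist φ g h = ⨆ x, edist (g x) (h x) / ENNReal.ofReal (φ x) := by
  simp_rw [edist_nndist, nndist_eq_nnnorm]
  refine le_antisymm ?_ (le_sInf fun C hC => iSup_le fun x => ENNReal.div_le_of_le_mul (hC x))
  rcases eq_or_ne (⨆ x, (‖g x - h x‖₊ : ℝ≥0∞) / ENNReal.ofReal (φ x)) ⊤ with hM | hM
  · exact hM ▸ le_top
  refine sInf_le fun x => ?_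
  rw [← ENNReal.div_le_iff_le_mul (Or.inr hM) (Or.inl ENNReal.ofReal_ne_top)]
  exact le_iSup (fun x => (‖g x - h x‖₊ : ℝ≥0∞) / ENNReal.ofReal (φ x)) x

theorem phiDist_le_iff {g h : A → X} {C : ℝ≥0∞} (hC : C ≠ ⊤) :
    phiDist φ g h ≤ C ↔ ∀ x, edist (g x) (h x) ≤ C * ENNReal.ofReal (φ x) := by
  simp only [phiDist_eq_iSup, iSup_le_iff,
    ENNReal.div_le_iff_le_mul (Or.inr hC) (Or.inl ENNReal.ofReal_ne_top)]

theorem edist_le_phiDist_mul {g h : A → X} (hgh : phiDist φ g h ≠ ⊤) (x : A) :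
    edist (g x) (h x) ≤ phiDist φ g h * ENNReal.ofReal (φ x) :=
  (phiDist_le_iff hgh).1 le_rfl x

theorem phiDist_eq_zero_iff {g h : A → X} : phiDist φ g h = 0 ↔ g = h := by
  simp [phiDist_eq_iSup, funext_iff]

theorem phiDist_comm (g h : A → X) : phiDist φ g h = phiDist φ h g := by
  simp only [phiDist_eq_iSup, edist_comm]

theorem phiDist_triangle (g h k : A → X) :
    phiDist φ g k ≤ phiDist φ g h + phiDist φ h k := by
  simp only [phiDist_eq_iSup]
  refine iSup_le fun x => ?_
  calc edist (g x) (k x) / ENNReal.ofReal (φ x)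
      ≤ (edist (g x) (h x) + edist (h x) (k x)) / ENNReal.ofReal (φ x) :=
        ENNReal.div_le_div_right (edist_triangle _ _ _) _
    _ = edist (g x) (h x) / ENNReal.ofReal (φ x) + edist (h x) (k x) / ENNReal.ofReal (φ x) :=
        ENNReal.add_div
    _ ≤ _ := add_le_add (le_iSup (fun x => edist (g x) (h x) / ENNReal.ofReal (φ x)) x)
        (le_iSup (fun x => edist (h x) (k x) / ENNReal.ofReal (φ x)) x)

theorem phiDist_le_of_tendsto {ι : Type*} {l : Filter ι} [l.NeBot] {f g : A → X} {v : ι → A → X}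
    {C : ℝ≥0∞} (hv : ∀ x, Tendsto (fun i => v i x) l (𝓝 (g x)))
    (hC : ∀ᶠ i in l, phiDist φ f (v i) ≤ C) : phiDist φ f g ≤ C := by
  rcases eq_or_ne C ⊤ with rfl | hC_top
  · exact le_top
  refine (phiDist_le_iff hC_top).2 fun x => ?_
  refine le_of_tendsto (tendsto_const_nhds.edist (hv x)) ?_
  filter_upwards [hC] with i hi using (phiDist_le_iff hC_top).1 hi x

theorem cauchySeq_apply_of_phiDist {u : ℕ → A → X}
    (hu : ∀ ε > 0, ∃ N, ∀ m ≥ N, ∀ n ≥ N, phiDist φ (u m) (u n) < ε) (x : A) :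
    CauchySeq fun n => u n x := by
  refine EMetric.cauchySeq_iff.2 fun ε hε => ?_
  obtain ⟨δ, hδ, hδε⟩ := ENNReal.exists_nnreal_pos_mul_lt ENNReal.ofReal_ne_top hε.ne'
  obtain ⟨N, hN⟩ := hu δ (by exact_mod_cast hδ)
  refine ⟨N, fun m hm n hn => ?_⟩
  calc edist (u m x) (u n x) ≤ phiDist φ (u m) (u n) * ENNReal.ofReal (φ x) :=
        edist_le_phiDist_mul (hN m hm n hn).ne_top x
    _ ≤ δ * ENNReal.ofReal (φ x) := by gcongr; exact (hN m hm n hn).le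
    _ < ε := hδε

theorem exists_tendsto_phiDist_of_cauchy [CompleteSpace X] {u : ℕ → A → X}
    (hu : ∀ ε > 0, ∃ N, ∀ m ≥ N, ∀ n ≥ N, phiDist φ (u m) (u n) < ε) :
    ∃ g : A → X, Tendsto (fun n => phiDist φ (u n) g) atTop (𝓝 0) := by
  choose g hg using fun x => cauchySeq_tendsto_of_complete (cauchySeq_apply_of_phiDist hu x)
  refine ⟨g, ENNReal.tendsto_atTop_zero.2 fun ε hε => ?_⟩
  obtain ⟨N, hN⟩ := hu ε hε
  exact ⟨N, fun n hn =>
    phiDist_le_of_tendsto hg (eventually_atTop.2 ⟨N, fun m hm => (hN n hn m hm).le⟩)⟩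

end

theorem phiDist_complete_generalized_metric_general {A X : Type*}
    [NormedAddCommGroup X] [CompleteSpace X]
    (φ : A → ℝ) :
    (∀ g h : A → X, phiDist φ g h = 0 ↔ g = h) ∧
    (∀ g h : A → X, phiDist φ g h = phiDist φ h g) ∧
    (∀ g h k : A → X, phiDist φ g k ≤ phiDist φ g h + phiDist φ h k) ∧
    (∀ u : ℕ → (A → X),
      (∀ ε : ℝ, 0 < ε → ∃ N : ℕ, ∀ m ≥ N, ∀ n ≥ N,
        phiDist φ (u m) (u n) < ENNReal.ofReal ε) →
      ∃ g : A → X, Filter.Tendsto (fun n => phiDist φ (u n) g)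
        Filter.atTop (nhds 0)) := by
  refine ⟨fun _ _ => phiDist_eq_zero_iff, phiDist_comm, phiDist_triangle, fun u hu => ?_⟩
  refine exists_tendsto_phiDist_of_cauchy fun ε hε => ?_
  obtain ⟨r, -, hr_pos, hrε⟩ := ENNReal.lt_iff_exists_real_btwn.1 hε
  obtain ⟨N, hN⟩ := hu r (ENNReal.ofReal_pos.1 hr_pos)
  exact ⟨N, fun m hm n hn => (hN m hm n hn).trans hrε⟩

/-- `phiDist` is a complete generalized metric on the space of all functions
from a normed space `A` to a Banach space `X`. -/
theorem phiDist_complete_generalized_metric {A X : Type*}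
    [NormedAddCommGroup A] [NormedSpace ℝ A]
    [NormedAddCommGroup X] [NormedSpace ℝ X] [CompleteSpace X]
    (φ : A → ℝ) (hφ : ∀ x, 0 ≤ φ x) :
    (∀ g h : A → X, phiDist φ g h = 0 ↔ g = h) ∧
    (∀ g h : A → X, phiDist φ g h = phiDist φ h g) ∧
    (∀ g h k : A → X, phiDist φ g k ≤ phiDist φ g h + phiDist φ h k) ∧
    (∀ u : ℕ → (A → X),
      (∀ ε : ℝ, 0 < ε → ∃ N : ℕ, ∀ m ≥ N, ∀ n ≥ N,
        phiDist φ (u m) (u n) < ENNReal.ofReal ε) →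
      ∃ g : A → X, Filter.Tendsto (fun n => phiDist φ (u n) g)
        Filter.atTop (nhds 0)) :=
  phiDist_complete_generalized_metric_general φ
end

section
/- With A, X as above: let p ∈ (0,1), θ ≥ 0, and suppose f : A → X satisfies ‖μf((x+y+z)/3) + μf((x−2y+z)/3) + μf((x+y−2z)/3) − f(μx)‖ ≤ θ(‖x‖^p + ‖y‖^p + ‖z‖^p) for all μ ∈ 𝕋 and ‖f([x,x,x]) − [f(x),x,x] − [x,f(x),x] − [x,x,f(x)]‖ ≤ 3θ‖x‖^p for all x. Then there exists a unique Jordan ternary derivation D : A → X with ‖f(x) − D(x)‖ ≤ (2^p·θ/(2 − 2^p))·‖x‖^p for all x ∈ A. -/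
/-- A Banach ternary algebra `A` together with a ternary Banach `A`-module `X`:
a trilinear bounded ternary product on `A` and the three trilinear bounded
module actions of `A` on `X`. -/
structure TernarySystem (A X : Type*)
    [NormedAddCommGroup A] [NormedSpace ℂ A]
    [NormedAddCommGroup X] [NormedSpace ℂ X] where
  tA : A → A → A → A
  m1 : X → A → A → X
  m2 : A → X → A → X
  m3 : A → A → X → X
  tA_lin1 : ∀ b c, IsLinearMap ℂ fun a => tA a b c
  tA_lin2 : ∀ a c, IsLinearMap ℂ fun b => tA a b c
  tA_lin3 : ∀ a b, IsLinearMap ℂ fun c => tA a b c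
  m1_lin1 : ∀ b c, IsLinearMap ℂ fun u => m1 u b c
  m1_lin2 : ∀ u c, IsLinearMap ℂ fun b => m1 u b c
  m1_lin3 : ∀ u b, IsLinearMap ℂ fun c => m1 u b c
  m2_lin1 : ∀ u c, IsLinearMap ℂ fun a => m2 a u c
  m2_lin2 : ∀ a c, IsLinearMap ℂ fun u => m2 a u c
  m2_lin3 : ∀ a u, IsLinearMap ℂ fun c => m2 a u c
  m3_lin1 : ∀ b u, IsLinearMap ℂ fun a => m3 a b u
  m3_lin2 : ∀ a u, IsLinearMap ℂ fun b => m3 a b u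
  m3_lin3 : ∀ a b, IsLinearMap ℂ fun u => m3 a b u
  norm_tA : ∀ a b c, ‖tA a b c‖ ≤ ‖a‖ * ‖b‖ * ‖c‖
  norm_m1 : ∀ u b c, ‖m1 u b c‖ ≤ ‖u‖ * ‖b‖ * ‖c‖
  norm_m2 : ∀ a u c, ‖m2 a u c‖ ≤ ‖a‖ * ‖u‖ * ‖c‖
  norm_m3 : ∀ a b u, ‖m3 a b u‖ ≤ ‖a‖ * ‖b‖ * ‖u‖

/-- A ternary derivation: a `ℂ`-linear map satisfying the ternary Leibniz rule. -/
def IsTernaryDerivation {A X : Type*}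
    [NormedAddCommGroup A] [NormedSpace ℂ A]
    [NormedAddCommGroup X] [NormedSpace ℂ X]
    (S : TernarySystem A X) (D : A → X) : Prop :=
  IsLinearMap ℂ D ∧
  ∀ x y z : A, D (S.tA x y z) = S.m1 (D x) y z + S.m2 x (D y) z + S.m3 x y (D z)

/-- A Jordan ternary derivation: a `ℂ`-linear map satisfying the Leibniz rule
on cubes. -/
def IsJordanTernaryDerivation {A X : Type*}
    [NormedAddCommGroup A] [NormedSpace ℂ A]
    [NormedAddCommGroup X] [NormedSpace ℂ X]
    (S : TernarySystem A X) (D : A → X) : Prop :=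
  IsLinearMap ℂ D ∧
  ∀ x : A, D (S.tA x x x) = S.m1 (D x) x x + S.m2 x (D x) x + S.m3 x x (D x)

/-!
Taking `μ = 1` and `(x, y, z) = (s + t + u, s - t, s - u)` in the first inequality shows that `f` is
approximately additive, while `y = z = 0` gives `‖3 μ f(y) - f(3 μ y)‖ ≤ 3ᵖ θ ‖y‖ᵖ`. Since `p < 1`,
Hyers' sequence `3⁻ⁿ f(3ⁿ x)` converges geometrically; its limit `D` is additive and commutes with
unit scalars, hence is `ℂ`-linear, and `‖f x - D x‖ ≤ 3ᵖ θ / (3 - 3ᵖ) ‖x‖ᵖ`, which is below the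
stated bound. Evaluating the second inequality at `3ⁿ x` and dividing by `3³ⁿ` gives the Leibniz
rule on cubes for `D` in the limit. Uniqueness holds because a linear map bounded by a multiple of
`‖x‖ᵖ` with `p < 1` vanishes.
-/

open Filter Topology

theorem Real.rpow_div_self_lt_one {t p : ℝ} (ht : 1 < t) (hp : p < 1) : t ^ p / t < 1 := by
  rw [div_lt_one (by linarith)]
  simpa using Real.rpow_lt_rpow_of_exponent_lt ht hp

theorem Real.rpow_div_sub_rpow_le_of_le {a b p : ℝ} (ha : 1 < a) (hab : a ≤ b) (hp : p < 1) :
    b ^ p / (b - b ^ p) ≤ a ^ p / (a - a ^ p) := by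
  have hap : a ^ p < a := by simpa using Real.rpow_lt_rpow_of_exponent_lt ha hp
  have hbp : b ^ p < b := by simpa using Real.rpow_lt_rpow_of_exponent_lt (ha.trans_le hab) hp
  have hq : (b / a) ^ p ≤ b / a := by
    simpa using Real.rpow_le_rpow_of_exponent_le ((one_le_div (by linarith)).mpr hab) hp.le
  rw [Real.div_rpow (by linarith) (by linarith), div_le_div_iff₀ (by positivity) (by linarith)]
    at hq
  rw [div_le_div_iff₀ (by linarith) (by linarith)]
  nlinarith

theorem eq_zero_of_tendsto_of_norm_le_geometric {F : Type*} [NormedAddCommGroup F] {u : ℕ → F}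
    {a : F} {K r : ℝ} (hu : Tendsto u atTop (𝓝 a)) (hr0 : 0 ≤ r) (hr1 : r < 1)
    (h : ∀ n, ‖u n‖ ≤ K * r ^ n) : a = 0 :=
  tendsto_nhds_unique hu <| squeeze_zero_norm h <| by
    simpa using (tendsto_pow_atTop_nhds_zero_of_lt_one hr0 hr1).const_mul K

section Hyers

variable {𝕜 E F : Type*} [NormedField 𝕜] [NormedAddCommGroup E] [NormedSpace 𝕜 E]
  [NormedAddCommGroup F] [NormedSpace 𝕜 F]

def rescale (a : 𝕜) (f : E → F) (x : E) : F := a⁻¹ • f (a • x)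

noncomputable def hyersLimit (c : 𝕜) (f : E → F) (x : E) : F :=
  limUnder atTop fun n => rescale (c ^ n) f x

theorem norm_pow_smul_rpow (c : 𝕜) (n : ℕ) (x : E) (p : ℝ) :
    ‖c ^ n • x‖ ^ p = (‖c‖ ^ p) ^ n * ‖x‖ ^ p := by
  rw [norm_smul, norm_pow, Real.mul_rpow (by positivity) (norm_nonneg x),
    Real.rpow_pow_comm (norm_nonneg c)]

theorem norm_inv_pow_smul_le {c : 𝕜} {v : F} {K p : ℝ} {n : ℕ}
    (h : ‖v‖ ≤ K * (‖c‖ ^ p) ^ n) : ‖(c ^ n)⁻¹ • v‖ ≤ K * (‖c‖ ^ p / ‖c‖) ^ n := by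
  rw [norm_smul, norm_inv, norm_pow, div_pow, mul_div_assoc', inv_mul_eq_div]
  gcongr

variable {c : 𝕜} {f : E → F} {K p : ℝ}

theorem dist_rescale_pow_succ_le (hc : c ≠ 0) (hf : ∀ y, ‖c • f y - f (c • y)‖ ≤ K * ‖y‖ ^ p)
    (x : E) (n : ℕ) :
    dist (rescale (c ^ n) f x) (rescale (c ^ (n + 1)) f x) ≤
      K * ‖x‖ ^ p / ‖c‖ * (‖c‖ ^ p / ‖c‖) ^ n := by
  have key : rescale (c ^ n) f x - rescale (c ^ (n + 1)) f x =
      (c ^ n)⁻¹ • (c⁻¹ • (c • f (c ^ n • x) - f (c • c ^ n • x))) := by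
    simp only [rescale, smul_smul, ← pow_succ', smul_sub]
    rw [pow_succ, mul_inv, inv_mul_cancel₀ hc, mul_one]
  rw [dist_eq_norm, key]
  refine norm_inv_pow_smul_le ?_
  rw [norm_smul, norm_inv, inv_mul_eq_div, div_le_iff₀ (norm_pos_iff.mpr hc)]
  calc ‖c • f (c ^ n • x) - f (c • c ^ n • x)‖ ≤ K * ‖c ^ n • x‖ ^ p := hf _
    _ = K * ‖x‖ ^ p / ‖c‖ * (‖c‖ ^ p) ^ n * ‖c‖ := by
      rw [norm_pow_smul_rpow]; field_simp [norm_ne_zero_iff.mpr hc]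

variable [CompleteSpace F] (hc : 1 < ‖c‖) (hp : p < 1)
  (hf : ∀ y, ‖c • f y - f (c • y)‖ ≤ K * ‖y‖ ^ p)
include hc hp hf

theorem tendsto_hyersLimit (x : E) :
    Tendsto (fun n => rescale (c ^ n) f x) atTop (𝓝 (hyersLimit c f x)) :=
  (cauchySeq_of_le_geometric _ _ (Real.rpow_div_self_lt_one hc hp)
    (dist_rescale_pow_succ_le (norm_pos_iff.mp (by linarith)) hf x)).tendsto_limUnder

theorem norm_sub_hyersLimit_le (x : E) :
    ‖f x - hyersLimit c f x‖ ≤ K / (‖c‖ - ‖c‖ ^ p) * ‖x‖ ^ p := by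
  have h := dist_le_of_le_geometric_of_tendsto₀ _ _ (Real.rpow_div_self_lt_one hc hp)
    (dist_rescale_pow_succ_le (norm_pos_iff.mp (by linarith)) hf x)
    (tendsto_hyersLimit hc hp hf x)
  have hcp : ‖c‖ ^ p < ‖c‖ := by simpa using Real.rpow_lt_rpow_of_exponent_lt hc hp
  simp only [rescale, pow_zero, inv_one, one_smul, dist_eq_norm] at h
  convert h using 1
  field_simp [sub_ne_zero.mpr hcp.ne']

theorem hyersLimit_add {M : ℝ}
    (hadd : ∀ x y, ‖f (x + y) - f x - f y‖ ≤ M * (‖x‖ ^ p + ‖y‖ ^ p)) (x y : E) :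
    hyersLimit c f (x + y) = hyersLimit c f x + hyersLimit c f y := by
  rw [← sub_eq_zero, sub_add_eq_sub_sub]
  refine eq_zero_of_tendsto_of_norm_le_geometric
    (((tendsto_hyersLimit hc hp hf _).sub (tendsto_hyersLimit hc hp hf x)).sub
      (tendsto_hyersLimit hc hp hf y)) (by positivity) (Real.rpow_div_self_lt_one hc hp)
    (K := M * (‖x‖ ^ p + ‖y‖ ^ p)) fun n => ?_
  simp only [rescale, ← smul_sub, smul_add]
  refine norm_inv_pow_smul_le ?_
  calc _ ≤ M * (‖c ^ n • x‖ ^ p + ‖c ^ n • y‖ ^ p) := hadd _ _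
    _ = _ := by rw [norm_pow_smul_rpow, norm_pow_smul_rpow]; ring

theorem hyersLimit_smul {μ : 𝕜} {L : ℝ}
    (hμ : ∀ y, ‖c • μ • f y - f (μ • c • y)‖ ≤ L * ‖y‖ ^ p) (x : E) :
    hyersLimit c f (μ • x) = μ • hyersLimit c f x := by
  rw [← sub_eq_zero]
  have hshift := (tendsto_hyersLimit hc hp hf (μ • x)).comp (tendsto_add_atTop_nat 1)
  refine eq_zero_of_tendsto_of_norm_le_geometric
    (hshift.sub ((tendsto_hyersLimit hc hp hf x).const_smul μ)) (by positivity)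
    (Real.rpow_div_self_lt_one hc hp) (K := L * ‖x‖ ^ p / ‖c‖) fun n => ?_
  have hc0 : c ≠ 0 := norm_pos_iff.mp (by linarith)
  have key : rescale (c ^ (n + 1)) f (μ • x) - μ • rescale (c ^ n) f x =
      -((c ^ n)⁻¹ • (c⁻¹ • (c • μ • f (c ^ n • x) - f (μ • c • c ^ n • x)))) := by
    simp only [rescale, smul_sub, smul_smul, pow_succ, mul_inv, neg_sub]
    rw [inv_mul_cancel_left₀ hc0, mul_comm μ, mul_comm μ, mul_comm c]
  simp only [Function.comp_apply, key, norm_neg]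
  refine norm_inv_pow_smul_le ?_
  rw [norm_smul, norm_inv, inv_mul_eq_div, div_le_iff₀ (norm_pos_iff.mpr hc0)]
  calc _ ≤ L * ‖c ^ n • x‖ ^ p := hμ _
    _ = L * ‖x‖ ^ p / ‖c‖ * (‖c‖ ^ p) ^ n * ‖c‖ := by
      rw [norm_pow_smul_rpow]; field_simp [norm_ne_zero_iff.mpr hc0]

end Hyers

section Uniqueness

variable {𝕜 E F : Type*} [NontriviallyNormedField 𝕜] [NormedAddCommGroup E] [NormedSpace 𝕜 E]
  [NormedAddCommGroup F] [NormedSpace 𝕜 F]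

theorem LinearMap.eq_zero_of_norm_le_rpow (L : E →ₗ[𝕜] F) {K p : ℝ} (hp : p < 1)
    (h : ∀ x, ‖L x‖ ≤ K * ‖x‖ ^ p) : L = 0 := by
  obtain ⟨c, hc⟩ := NormedField.exists_one_lt_norm 𝕜
  have hc0 : c ≠ 0 := norm_pos_iff.mp (by linarith)
  ext x
  refine eq_zero_of_tendsto_of_norm_le_geometric tendsto_const_nhds (by positivity)
    (Real.rpow_div_self_lt_one hc hp) (K := K * ‖x‖ ^ p) fun n => ?_
  rw [← inv_smul_smul₀ (pow_ne_zero n hc0) (L x), ← L.map_smul]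
  refine norm_inv_pow_smul_le ?_
  calc _ ≤ K * ‖c ^ n • x‖ ^ p := h _
    _ = _ := by rw [norm_pow_smul_rpow]; ring

theorem eq_of_isLinearMap_of_norm_sub_le_rpow {f D D' : E → F}
    (hD : IsLinearMap 𝕜 D) (hD' : IsLinearMap 𝕜 D') {K p : ℝ} (hp : p < 1)
    (h : ∀ x, ‖f x - D x‖ ≤ K * ‖x‖ ^ p) (h' : ∀ x, ‖f x - D' x‖ ≤ K * ‖x‖ ^ p) : D' = D := by
  have hzero := (hD'.mk' D' - hD.mk' D).eq_zero_of_norm_le_rpow (K := 2 * K) hp fun x => by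
    calc ‖D' x - D x‖ = ‖(f x - D x) - (f x - D' x)‖ := by congr 1; abel
      _ ≤ ‖f x - D x‖ + ‖f x - D' x‖ := norm_sub_le _ _
      _ ≤ 2 * K * ‖x‖ ^ p := by linarith [h x, h' x]
  funext x
  exact sub_eq_zero.mp (LinearMap.congr_fun hzero x)

end Uniqueness

section ComplexLinear

variable {E F : Type*} [AddCommGroup E] [Module ℂ E] [AddCommGroup F] [Module ℂ F] {D : E → F}
  (hadd : ∀ x y, D (x + y) = D x + D y) (hunit : ∀ μ : ℂ, ‖μ‖ = 1 → ∀ x, D (μ • x) = μ • D x)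
include hadd hunit

theorem map_ofReal_smul_of_abs_le_one {t : ℝ} (ht : |t| ≤ 1) (x : E) :
    D ((t : ℂ) • x) = (t : ℂ) • D x := by
  set μ : ℂ := t + (√(1 - t ^ 2) : ℝ) * Complex.I
  have hμ : ‖μ‖ = 1 := by
    rw [Complex.norm_add_mul_I, Real.sq_sqrt (by nlinarith [abs_le.mp ht]), add_sub_cancel,
      Real.sqrt_one]
  have ht : (t : ℂ) = ((2 : ℕ) : ℂ)⁻¹ * (μ + starRingEnd ℂ μ) := by
    rw [Complex.add_conj]; simp [μ]
  have hhalf := map_inv_natCast_smul (AddMonoidHom.mk' D hadd) ℂ ℂ 2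
  simp only [AddMonoidHom.mk'_apply] at hhalf
  rw [ht, ← smul_smul, hhalf, add_smul, hadd, hunit μ hμ, hunit _ (by rwa [RCLike.norm_conj]),
    ← add_smul, smul_smul]

theorem isLinearMap_of_map_add_of_map_unit_smul : IsLinearMap ℂ D := by
  refine ⟨hadd, fun c x => ?_⟩
  obtain ⟨n, hn⟩ := exists_nat_gt ‖c‖
  have hn0 : (0 : ℝ) < n := (norm_nonneg c).trans_lt hn
  have hre : |c.re / n| ≤ 1 := by
    rw [abs_div, Nat.abs_cast, div_le_one hn0]; exact (Complex.abs_re_le_norm c).trans hn.le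
  have him : |c.im / n| ≤ 1 := by
    rw [abs_div, Nat.abs_cast, div_le_one hn0]; exact (Complex.abs_im_le_norm c).trans hn.le
  have hc : c = n * (((c.re / n : ℝ) : ℂ) + ((c.im / n : ℝ) : ℂ) * Complex.I) := by
    have hn0' : (n : ℂ) ≠ 0 := by exact_mod_cast hn0.ne'
    push_cast
    field_simp
    exact (Complex.re_add_im c).symm
  have hnat := map_natCast_smul (AddMonoidHom.mk' D hadd) ℂ ℂ n
  simp only [AddMonoidHom.mk'_apply] at hnat
  rw [hc, ← smul_smul, hnat, add_smul, hadd, map_ofReal_smul_of_abs_le_one hadd hunit hre,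
    ← smul_smul, map_ofReal_smul_of_abs_le_one hadd hunit him, hunit _ Complex.norm_I,
    smul_smul, ← add_smul, smul_smul]

end ComplexLinear

section FunctionalInequality

variable {A X : Type*} [NormedAddCommGroup A] [NormedAddCommGroup X] {f : A → X} {p θ : ℝ}

theorem norm_map_add_add_sub_le [NormedSpace ℂ A]
    (hf : ∀ x y z : A,
      ‖f (((3 : ℂ)⁻¹) • (x + y + z)) + f (((3 : ℂ)⁻¹) • (x - 2 • y + z)) +
          f (((3 : ℂ)⁻¹) • (x + y - 2 • z)) - f x‖ ≤ θ * (‖x‖ ^ p + ‖y‖ ^ p + ‖z‖ ^ p))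
    (s t u : A) :
    ‖f (s + t + u) - f s - f t - f u‖ ≤ θ * (‖s + t + u‖ ^ p + ‖s - t‖ ^ p + ‖s - u‖ ^ p) := by
  have h := hf (s + t + u) (s - t) (s - u)
  rw [show ((3 : ℂ)⁻¹) • ((s + t + u) + (s - t) + (s - u)) = s by module,
    show ((3 : ℂ)⁻¹) • ((s + t + u) - 2 • (s - t) + (s - u)) = t by module,
    show ((3 : ℂ)⁻¹) • ((s + t + u) + (s - t) - 2 • (s - u)) = u by module] at h
  calc _ = ‖f s + f t + f u - f (s + t + u)‖ := by rw [← norm_neg]; congr 1; abel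
    _ ≤ _ := h

variable [NormedSpace ℂ X]

theorem norm_three_smul_smul_sub_le [NormedSpace ℂ A] (hp0 : 0 < p) {μ : ℂ}
    (hf : ∀ x y z : A,
      ‖μ • f (((3 : ℂ)⁻¹) • (x + y + z)) + μ • f (((3 : ℂ)⁻¹) • (x - 2 • y + z)) +
          μ • f (((3 : ℂ)⁻¹) • (x + y - 2 • z)) - f (μ • x)‖ ≤
        θ * (‖x‖ ^ p + ‖y‖ ^ p + ‖z‖ ^ p)) (y : A) :
    ‖(3 : ℂ) • μ • f y - f (μ • (3 : ℂ) • y)‖ ≤ θ * 3 ^ p * ‖y‖ ^ p := by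
  have h := hf ((3 : ℂ) • y) 0 0
  simp only [smul_zero, add_zero, sub_zero, inv_smul_smul₀ (three_ne_zero' ℂ), norm_zero,
    Real.zero_rpow hp0.ne', norm_smul, Complex.norm_ofNat,
    Real.mul_rpow zero_le_three (norm_nonneg y)] at h
  calc _ = ‖μ • f y + μ • f y + μ • f y - f (μ • (3 : ℂ) • y)‖ := by congr 1; module
    _ ≤ _ := h
    _ = _ := by ring

theorem map_zero_of_norm_map_add_add_sub_le (hp0 : 0 < p)
    (hE : ∀ s t u : A,
      ‖f (s + t + u) - f s - f t - f u‖ ≤ θ * (‖s + t + u‖ ^ p + ‖s - t‖ ^ p + ‖s - u‖ ^ p)) :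
    f 0 = 0 := by
  have h := hE 0 0 0
  simp only [add_zero, sub_zero, norm_zero, Real.zero_rpow hp0.ne', mul_zero,
    norm_le_zero_iff] at h
  have h2 : (2 : ℂ) • f 0 = 0 := by rw [← neg_eq_zero, ← h]; module
  exact (smul_eq_zero.mp h2).resolve_left two_ne_zero

theorem norm_map_add_sub_le (hp0 : 0 < p) (hp1 : p ≤ 1) (hθ : 0 ≤ θ)
    (hE : ∀ s t u : A,
      ‖f (s + t + u) - f s - f t - f u‖ ≤ θ * (‖s + t + u‖ ^ p + ‖s - t‖ ^ p + ‖s - u‖ ^ p))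
    (s t : A) : ‖f (s + t) - f s - f t‖ ≤ 3 * θ * (‖s‖ ^ p + ‖t‖ ^ p) := by
  have h := hE s t 0
  simp only [add_zero, sub_zero, map_zero_of_norm_map_add_add_sub_le hp0 hE] at h
  have hsub : ∀ a b : A, ‖a + b‖ ^ p ≤ ‖a‖ ^ p + ‖b‖ ^ p := fun a b =>
    (Real.rpow_le_rpow (norm_nonneg _) (norm_add_le a b) hp0.le).trans
      (Real.rpow_add_le_add_rpow (norm_nonneg _) (norm_nonneg _) hp0.le hp1)
  have hst := hsub s t
  have hs_t := hsub s (-t)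
  rw [norm_neg, ← sub_eq_add_neg] at hs_t
  calc _ ≤ θ * (‖s + t‖ ^ p + ‖s - t‖ ^ p + ‖s‖ ^ p) := h
    _ ≤ θ * (3 * (‖s‖ ^ p + ‖t‖ ^ p)) := by
      gcongr; nlinarith [Real.rpow_nonneg (norm_nonneg t) p]
    _ = _ := by ring

end FunctionalInequality

namespace TernarySystem

variable {A X : Type*} [NormedAddCommGroup A] [NormedSpace ℂ A] [NormedAddCommGroup X]
  [NormedSpace ℂ X] (S : TernarySystem A X)

theorem continuous_m1 (b c : A) : Continuous fun u => S.m1 u b c :=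
  ((S.m1_lin1 b c).mk' _).mkContinuous (‖b‖ * ‖c‖)
    (fun u => (S.norm_m1 u b c).trans_eq (by ring)) |>.continuous

theorem continuous_m2 (a c : A) : Continuous fun u => S.m2 a u c :=
  ((S.m2_lin2 a c).mk' _).mkContinuous (‖a‖ * ‖c‖)
    (fun u => (S.norm_m2 a u c).trans_eq (by ring)) |>.continuous

theorem continuous_m3 (a b : A) : Continuous fun u => S.m3 a b u :=
  ((S.m3_lin3 a b).mk' _).mkContinuous (‖a‖ * ‖b‖) (fun u => S.norm_m3 a b u) |>.continuous

/-- `S.cubeDefect (D (S.tA x x x)) (D x) x = 0` is the Leibniz rule on cubes; the two values of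
`D` are separate arguments so that approximants at different scales can be inserted. -/
def cubeDefect (v u : X) (x : A) : X := v - S.m1 u x x - S.m2 x u x - S.m3 x x u

theorem tA_smul_smul_smul (a : ℂ) (x : A) :
    S.tA (a • x) (a • x) (a • x) = a ^ 3 • S.tA x x x := by
  rw [(S.tA_lin1 _ _).map_smul, (S.tA_lin2 _ _).map_smul, (S.tA_lin3 _ _).map_smul, smul_smul,
    smul_smul, pow_three, mul_assoc]

theorem cubeDefect_smul (a : ℂ) (v u : X) (x : A) :
    S.cubeDefect (a ^ 3 • v) (a • u) (a • x) = a ^ 3 • S.cubeDefect v u x := by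
  simp only [cubeDefect, (S.m1_lin1 _ _).map_smul, (S.m1_lin2 _ _).map_smul,
    (S.m1_lin3 _ _).map_smul, (S.m2_lin1 _ _).map_smul, (S.m2_lin2 _ _).map_smul,
    (S.m2_lin3 _ _).map_smul, (S.m3_lin1 _ _).map_smul, (S.m3_lin2 _ _).map_smul,
    (S.m3_lin3 _ _).map_smul, smul_smul, smul_sub]
  ring_nf

theorem tendsto_cubeDefect {v u : ℕ → X} {v₀ u₀ : X} (hv : Tendsto v atTop (𝓝 v₀))
    (hu : Tendsto u atTop (𝓝 u₀)) (x : A) :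
    Tendsto (fun n => S.cubeDefect (v n) (u n) x) atTop (𝓝 (S.cubeDefect v₀ u₀ x)) :=
  ((hv.sub (((S.continuous_m1 x x).tendsto u₀).comp hu)).sub
    (((S.continuous_m2 x x).tendsto u₀).comp hu)).sub
      (((S.continuous_m3 x x).tendsto u₀).comp hu)

variable [CompleteSpace X] {c : ℂ} {f : A → X} {K L p : ℝ}

theorem cubeDefect_hyersLimit_eq_zero (hc : 1 < ‖c‖) (hp : p < 1)
    (hf : ∀ y, ‖c • f y - f (c • y)‖ ≤ K * ‖y‖ ^ p)
    (hJ : ∀ x, ‖S.cubeDefect (f (S.tA x x x)) (f x) x‖ ≤ L * ‖x‖ ^ p) (x : A) :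
    S.cubeDefect (hyersLimit c f (S.tA x x x)) (hyersLimit c f x) x = 0 := by
  have hc0 : c ≠ 0 := norm_pos_iff.mp (by linarith)
  have hcube := (tendsto_hyersLimit hc hp hf (S.tA x x x)).comp
    (strictMono_mul_right_of_pos (by norm_num : 0 < 3)).tendsto_atTop
  refine eq_zero_of_tendsto_of_norm_le_geometric
    (S.tendsto_cubeDefect hcube (tendsto_hyersLimit hc hp hf x) x) (by positivity)
    (Real.rpow_div_self_lt_one hc hp) (K := L * ‖x‖ ^ p) fun n => ?_
  have hcn : c ^ n ≠ 0 := pow_ne_zero n hc0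
  have key : S.cubeDefect (rescale (c ^ (n * 3)) f (S.tA x x x)) (rescale (c ^ n) f x) x =
      (c ^ n)⁻¹ • ((c ^ n) ^ 2)⁻¹ • S.cubeDefect (f (S.tA (c ^ n • x) (c ^ n • x) (c ^ n • x)))
        (f (c ^ n • x)) (c ^ n • x) := by
    rw [S.tA_smul_smul_smul, pow_mul, rescale, rescale,
      ← smul_inv_smul₀ (pow_ne_zero 3 hcn) (f _), ← smul_inv_smul₀ hcn (f (c ^ n • x)),
      S.cubeDefect_smul, smul_inv_smul₀ (pow_ne_zero 3 hcn), smul_inv_smul₀ hcn, smul_smul,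
      smul_smul, ← mul_inv, ← pow_succ', inv_mul_cancel₀ (pow_ne_zero 3 hcn), one_smul]
  rw [Function.comp_apply, key]
  refine norm_inv_pow_smul_le ?_
  have hpow : 1 ≤ ‖(c ^ n) ^ 2‖ := by
    rw [norm_pow, norm_pow]; exact one_le_pow₀ (one_le_pow₀ hc.le)
  calc ‖((c ^ n) ^ 2)⁻¹ • _‖ ≤ ‖S.cubeDefect (f (S.tA (c ^ n • x) (c ^ n • x) (c ^ n • x)))
        (f (c ^ n • x)) (c ^ n • x)‖ := by
        rw [norm_smul, norm_inv]
        exact mul_le_of_le_one_left (norm_nonneg _) (inv_le_one_of_one_le₀ hpow)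
    _ ≤ L * ‖c ^ n • x‖ ^ p := hJ _
    _ = L * ‖x‖ ^ p * (‖c‖ ^ p) ^ n := by rw [norm_pow_smul_rpow]; ring

end TernarySystem

theorem jordan_ternary_derivation_stability_rpow_general {A X : Type*}
    [NormedAddCommGroup A] [NormedSpace ℂ A]
    [NormedAddCommGroup X] [NormedSpace ℂ X] [CompleteSpace X]
    (S : TernarySystem A X)
    (f : A → X) (p θ : ℝ) (hp0 : 0 < p) (hp1 : p < 1) (hθ : 0 ≤ θ)
    (hf1 : ∀ (μ : ℂ), ‖μ‖ = 1 → ∀ x y z : A,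
      ‖μ • f (((3 : ℂ)⁻¹) • (x + y + z)) + μ • f (((3 : ℂ)⁻¹) • (x - 2 • y + z)) +
          μ • f (((3 : ℂ)⁻¹) • (x + y - 2 • z)) - f (μ • x)‖ ≤
        θ * (‖x‖ ^ p + ‖y‖ ^ p + ‖z‖ ^ p))
    (hf2 : ∀ x : A,
      ‖f (S.tA x x x) - S.m1 (f x) x x - S.m2 x (f x) x - S.m3 x x (f x)‖ ≤
        3 * θ * ‖x‖ ^ p) :
    ∃! D : A → X, IsJordanTernaryDerivation S D ∧
      ∀ x : A, ‖f x - D x‖ ≤ ((2 : ℝ) ^ p * θ / (2 - (2 : ℝ) ^ p)) * ‖x‖ ^ p := by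
  have hE := norm_map_add_add_sub_le fun x y z => by
    simpa only [one_smul] using hf1 1 norm_one x y z
  have hstep : ∀ y : A, ‖(3 : ℂ) • f y - f ((3 : ℂ) • y)‖ ≤ θ * 3 ^ p * ‖y‖ ^ p := fun y => by
    simpa only [one_smul] using norm_three_smul_smul_sub_le hp0 (hf1 1 norm_one) y
  have h3 : (1 : ℝ) < ‖(3 : ℂ)‖ := by norm_num
  set D := hyersLimit (3 : ℂ) f
  have hlin : IsLinearMap ℂ D := isLinearMap_of_map_add_of_map_unit_smul
    (hyersLimit_add h3 hp1 hstep (norm_map_add_sub_le hp0 hp1.le hθ hE))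
    fun μ hμ => hyersLimit_smul h3 hp1 hstep (norm_three_smul_smul_sub_le hp0 (hf1 μ hμ))
  have hbound : ∀ x, ‖f x - D x‖ ≤ (2 ^ p * θ / (2 - 2 ^ p)) * ‖x‖ ^ p := fun x => by
    -- Hyers' method with factor `3` gives the sharper constant `3ᵖ θ / (3 - 3ᵖ)`.
    refine (norm_sub_hyersLimit_le h3 hp1 hstep x).trans
      (mul_le_mul_of_nonneg_right ?_ (by positivity))
    rw [Complex.norm_ofNat, mul_comm θ, mul_div_right_comm, mul_div_right_comm _ θ]
    exact mul_le_mul_of_nonneg_right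
      (Real.rpow_div_sub_rpow_le_of_le one_lt_two (by norm_num) hp1) hθ
  refine ⟨D, ⟨⟨hlin, fun x => ?_⟩, hbound⟩, fun D' ⟨⟨hlin', _⟩, hD'⟩ =>
    eq_of_isLinearMap_of_norm_sub_le_rpow hlin hlin' hp1 hbound hD'⟩
  have hJ := S.cubeDefect_hyersLimit_eq_zero h3 hp1 hstep hf2 x
  rwa [TernarySystem.cubeDefect, sub_sub, sub_sub, sub_eq_zero, ← add_assoc] at hJ

/-- Hyers–Ulam–Rassias stability of Jordan ternary derivations, `p ∈ (0,1)`
(Corollary 2.8). -/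
theorem jordan_ternary_derivation_stability_rpow {A X : Type*}
    [NormedAddCommGroup A] [NormedSpace ℂ A] [CompleteSpace A]
    [NormedAddCommGroup X] [NormedSpace ℂ X] [CompleteSpace X]
    (S : TernarySystem A X)
    (f : A → X) (p θ : ℝ) (hp0 : 0 < p) (hp1 : p < 1) (hθ : 0 ≤ θ)
    (hf1 : ∀ (μ : ℂ), ‖μ‖ = 1 → ∀ x y z : A,
      ‖μ • f (((3 : ℂ)⁻¹) • (x + y + z)) + μ • f (((3 : ℂ)⁻¹) • (x - 2 • y + z)) +
          μ • f (((3 : ℂ)⁻¹) • (x + y - 2 • z)) - f (μ • x)‖ ≤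
        θ * (‖x‖ ^ p + ‖y‖ ^ p + ‖z‖ ^ p))
    (hf2 : ∀ x : A,
      ‖f (S.tA x x x) - S.m1 (f x) x x - S.m2 x (f x) x - S.m3 x x (f x)‖ ≤
        3 * θ * ‖x‖ ^ p) :
    ∃! D : A → X, IsJordanTernaryDerivation S D ∧
      ∀ x : A, ‖f x - D x‖ ≤ ((2 : ℝ) ^ p * θ / (2 - (2 : ℝ) ^ p)) * ‖x‖ ^ p :=
  jordan_ternary_derivation_stability_rpow_general S f p θ hp0 hp1 hθ hf1 hf2
end
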